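/- For every natural number k there exists a natural number N such that every finite simple graph G with c₂(G) > k, all of whose proper induced subgraphs H satisfy c₂(H) ≤ k, has at most N vertices. (Consequently, the class of graphs with subgraph complementation number at most k is defined by a finite set of minimal forbidden induced subgraphs.) -/

import Mathlib

open Matrix

/-- A subgraph complementation system for `G`: a finite collection (multiset) of subsets of
vertices such that two distinct vertices are adjacent iff they lie together in an odd
number of the sets. -/
def IsSCS {V : Type*} [DecidableEq V] (G : SimpleGraph V) (𝒞 : Multiset (Finset V)) : Prop :=
  ∀ u v : V, u ≠ v →
    (G.Adj u v ↔ Odd (Multiset.card (𝒞.filter (fun C => u ∈ C ∧ v ∈ C))))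

/-- The subgraph complementation number `c₂(G)`: the minimum cardinality of a subgraph
complementation system for `G`. -/
noncomputable def c2 {V : Type*} [DecidableEq V] (G : SimpleGraph V) : ℕ :=
  sInf {k | ∃ 𝒞 : Multiset (Finset V), IsSCS G 𝒞 ∧ Multiset.card 𝒞 = k}

/-- A symmetric matrix over `F₂` fits `G` if its off-diagonal entries record adjacency. -/
def FitsF2 {V : Type*} (G : SimpleGraph V) (A : Matrix V V (ZMod 2)) : Prop :=
  A.IsSymm ∧ ∀ u v : V, u ≠ v → (A u v = 1 ↔ G.Adj u v)

/-- The minimum rank of `G` over `F₂`: the minimum rank of a symmetric matrix over `F₂`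
that fits `G`. -/
noncomputable def mrF2 {V : Type*} [Fintype V] (G : SimpleGraph V) : ℕ :=
  sInf {k | ∃ A : Matrix V V (ZMod 2), FitsF2 G A ∧ A.rank = k}

/-!
If `G` is a minimal graph with `c₂(G) > k`, every vertex-deleted subgraph has a system of at
most `k` sets. For such a system of `G - v`, vertices with the same membership pattern and the
same adjacency to `v` are twins, so a large `G` contains `k + 3` mutual twins. Delete one of
them, `w`, and take a system `𝒟` of at most `k` sets for `G - w`: adding `w` to every set that
contains another twin `u` gives a system for `G` of the same size, unless the number of sets
containing `u` has the wrong parity for the adjacency of `u` and `w`. If that happens for all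
`k + 2` remaining twins, their incidence vectors in `𝔽₂^𝒟` have Gram matrix `I + aJ`, so
`k + 1` of them are linearly independent, which is impossible in dimension `|𝒟| ≤ k`.
-/

open Finset

lemma card_le_of_dotProduct_eq {K ι : Type*} [Field K] [Fintype ι] {n : ℕ}
    (x : Fin (n + 1) → ι → K) (a : K) (hdiag : ∀ i, x i ⬝ᵥ x i = a + 1)
    (hoff : ∀ i j, i ≠ j → x i ⬝ᵥ x j = a) : n ≤ Fintype.card ι := by
  suffices LinearIndependent K (fun i : Fin n => x i.castSucc) by
    simpa using this.fintype_card_le_finrank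
  rw [Fintype.linearIndependent_iff]
  intro g hg i
  -- pair the relation `∑ g l • x l = 0` with the unused vector `x (last n)` and with `x i`
  have hdot : ∀ j, ∑ l, g l * (x l.castSucc ⬝ᵥ x j) = 0 := fun j => by
    simp_rw [← smul_eq_mul, ← smul_dotProduct, ← sum_dotProduct, hg, zero_dotProduct]
  have hlast : ∑ l, g l * a = 0 := by
    simpa [hoff _ _ (Fin.castSucc_lt_last _).ne] using hdot (Fin.last n)
  have hi : ∑ l, (g l * a + if l = i then g l else 0) = 0 := by
    refine (Fintype.sum_congr _ _ fun l => ?_).symm.trans (hdot i.castSucc)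
    by_cases hl : l = i
    · simp [hl, hdiag, mul_add]
    · simp [hl, hoff _ _ (Fin.castSucc_injective _ |>.ne hl)]
  simpa [sum_add_distrib, hlast] using hi

lemma natCast_zmod_two_eq_ite {n : ℕ} {P : Prop} [Decidable P] (h : Odd n ↔ P) :
    (n : ZMod 2) = if P then 1 else 0 := by
  split_ifs with hP
  · exact ZMod.natCast_eq_one_iff_odd.mpr (h.mpr hP)
  · exact ZMod.natCast_eq_zero_iff_even.mpr (Nat.not_odd_iff_even.mp (mt h.mp hP))

section

variable {V : Type*} [DecidableEq V]

def pairCount (𝒞 : Multiset (Finset V)) (u v : V) : ℕ :=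
  Multiset.card (𝒞.filter fun C => u ∈ C ∧ v ∈ C)

lemma pairCount_comm (𝒞 : Multiset (Finset V)) (u v : V) : pairCount 𝒞 u v = pairCount 𝒞 v u :=
  congrArg _ (Multiset.filter_congr fun _ _ => and_comm)

lemma pairCount_eq_card_filter_filter (𝒞 : Multiset (Finset V)) (u v : V) :
    pairCount 𝒞 u v = Multiset.card ((𝒞.filter (u ∈ ·)).filter (v ∈ ·)) := by
  rw [Multiset.filter_filter, pairCount_comm]
  rfl

lemma pairCount_map {α : Type*} (𝒞 : Multiset α) (g : α → Finset V) (u v : V) :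
    pairCount (𝒞.map g) u v = Multiset.card (𝒞.filter fun C => u ∈ g C ∧ v ∈ g C) := by
  rw [pairCount, Multiset.filter_map, Multiset.card_map]
  rfl

def IsSCSOn (G : SimpleGraph V) (S : Set V) (𝒞 : Multiset (Finset V)) : Prop :=
  ∀ u ∈ S, ∀ v ∈ S, u ≠ v → (G.Adj u v ↔ Odd (pairCount 𝒞 u v))

lemma exists_isSCS [Fintype V] (G : SimpleGraph V) : ∃ 𝒞 : Multiset (Finset V), IsSCS G 𝒞 := by
  classical
  refine ⟨G.edgeFinset.val.map Sym2.toFinset, fun u v huv => ?_⟩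
  have hfilter : G.edgeFinset.filter (fun e => u ∈ e ∧ v ∈ e) = G.edgeFinset.filter (· = s(u, v)) :=
    Finset.filter_congr fun e _ => Sym2.mem_and_mem_iff huv
  change G.Adj u v ↔ Odd (pairCount _ u v)
  simp only [pairCount_map, Sym2.mem_toFinset]
  change G.Adj u v ↔ Odd (G.edgeFinset.filter (fun e => u ∈ e ∧ v ∈ e)).card
  rw [hfilter, Finset.filter_eq']
  by_cases h : G.Adj u v <;> simp [h]

lemma c2_le_card {G : SimpleGraph V} {𝒞 : Multiset (Finset V)} (h : IsSCS G 𝒞) :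
    c2 G ≤ Multiset.card 𝒞 :=
  Nat.sInf_le ⟨𝒞, h, rfl⟩

lemma exists_isSCS_card_eq_c2 [Fintype V] (G : SimpleGraph V) :
    ∃ 𝒞 : Multiset (Finset V), IsSCS G 𝒞 ∧ Multiset.card 𝒞 = c2 G := by
  obtain ⟨𝒞, h⟩ := exists_isSCS G
  exact Nat.sInf_mem (s := {k | ∃ 𝒞 : Multiset (Finset V), IsSCS G 𝒞 ∧ Multiset.card 𝒞 = k})
    ⟨_, 𝒞, h, rfl⟩

lemma exists_isSCSOn_card_eq_c2_induce [Fintype V] (G : SimpleGraph V) (S : Set V) :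
    ∃ 𝒞 : Multiset (Finset V), Multiset.card 𝒞 = c2 (G.induce S) ∧
      (∀ C ∈ 𝒞, ↑C ⊆ S) ∧ IsSCSOn G S 𝒞 := by
  classical
  obtain ⟨𝒞, h𝒞, hcard⟩ := exists_isSCS_card_eq_c2 (G.induce S)
  refine ⟨𝒞.map (Finset.map (Function.Embedding.subtype (· ∈ S))), by simpa using hcard, ?_, ?_⟩
  · simp only [Multiset.mem_map]
    rintro _ ⟨D, -, rfl⟩
    simp
  · intro u hu v hv huv
    lift u to S using hu
    lift v to S using hv
    rw [pairCount_map]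
    simpa using h𝒞 u v (Subtype.coe_injective.ne_iff.mp huv)

lemma exists_isSCSOn_compl_singleton [Fintype V] (G : SimpleGraph V) (w : V) :
    ∃ 𝒟 : Multiset (Finset V), Multiset.card 𝒟 = c2 (G.induce ((univ.erase w : Finset V) : Set V)) ∧
      (∀ C ∈ 𝒟, w ∉ C) ∧ IsSCSOn G {w}ᶜ 𝒟 := by
  have hS : ((univ.erase w : Finset V) : Set V) = {w}ᶜ := by ext; simp
  obtain ⟨𝒟, hcard, hsub, h⟩ :=
    exists_isSCSOn_card_eq_c2_induce G ((univ.erase w : Finset V) : Set V)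
  exact ⟨𝒟, hcard, fun C hC hw => by simpa using hsub C hC hw, hS ▸ h⟩

def IsTwin (G : SimpleGraph V) (p q : V) : Prop :=
  ∀ x, x ≠ p → x ≠ q → (G.Adj p x ↔ G.Adj q x)

lemma IsSCSOn.isTwin {G : SimpleGraph V} {v : V} {𝒞 : Multiset (Finset V)}
    (h : IsSCSOn G {v}ᶜ 𝒞) {p q : V} (hp : p ≠ v) (hq : q ≠ v)
    (hfilter : 𝒞.filter (p ∈ ·) = 𝒞.filter (q ∈ ·)) (hadj : G.Adj p v ↔ G.Adj q v) :
    IsTwin G p q := by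
  intro x hxp hxq
  rcases eq_or_ne x v with rfl | hxv
  · exact hadj
  · rw [h p hp x hxv hxp.symm, h q hq x hxv hxq.symm, pairCount_eq_card_filter_filter,
      pairCount_eq_card_filter_filter, hfilter]

lemma IsSCSOn.exists_twin_finset_card_gt [Fintype V] {G : SimpleGraph V} {v : V}
    {𝒞 : Multiset (Finset V)} (h : IsSCSOn G {v}ᶜ 𝒞) {k m : ℕ} (hk : Multiset.card 𝒞 ≤ k)
    (hV : 2 ^ (k + 1) * m < Fintype.card V - 1) :
    ∃ T : Finset V, m < #T ∧ ∀ p ∈ T, ∀ q ∈ T, IsTwin G p q := by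
  classical
  let σ : V → Multiset (Finset V) × Bool := fun u => (𝒞.filter (u ∈ ·), decide (G.Adj u v))
  let B := 𝒞.powerset.toFinset ×ˢ (univ : Finset Bool)
  have hσ : ∀ u ∈ univ.erase v, σ u ∈ B := fun u _ =>
    mem_product.mpr ⟨Multiset.mem_toFinset.mpr (Multiset.mem_powerset.mpr (Multiset.filter_le _ _)),
      mem_univ _⟩
  have hB : #B ≤ 2 ^ (k + 1) := calc
    #B ≤ 2 ^ Multiset.card 𝒞 * 2 := by
      rw [card_product, card_univ, Fintype.card_bool, ← Multiset.card_powerset]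
      exact Nat.mul_le_mul_right _ (Multiset.toFinset_card_le _)
    _ ≤ 2 ^ (k + 1) := by rw [pow_succ]; gcongr; norm_num
  have hfiber : #B * m < #(univ.erase v) := by
    rw [card_erase_of_mem (mem_univ v), card_univ]
    exact lt_of_le_of_lt (Nat.mul_le_mul_right _ hB) hV
  obtain ⟨b, -, hb⟩ := exists_lt_card_fiber_of_mul_lt_card_of_maps_to hσ hfiber
  refine ⟨_, hb, fun p hp q hq => ?_⟩
  simp only [mem_filter, mem_erase] at hp hq
  have hpq := hp.2.trans hq.2.symm
  simp only [σ, Prod.ext_iff, decide_eq_decide] at hpq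
  exact h.isTwin hp.1.1 hq.1.1 hpq.1 hpq.2

lemma IsSCSOn.isSCS_map_clone {G : SimpleGraph V} {w u : V} {𝒟 : Multiset (Finset V)}
    (h : IsSCSOn G {w}ᶜ 𝒟) (hw : ∀ C ∈ 𝒟, w ∉ C) (huw : u ≠ w) (htwin : IsTwin G u w)
    (hpar : G.Adj u w ↔ Odd (pairCount 𝒟 u u)) :
    IsSCS G (𝒟.map fun C => if u ∈ C then insert w C else C) := by
  let φ : V → V := fun z => if z = w then u else z
  have hmem : ∀ C ∈ 𝒟, ∀ z, z ∈ (if u ∈ C then insert w C else C) ↔ φ z ∈ C := by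
    intro C hC z
    by_cases hz : z = w
    · subst hz
      split_ifs <;> simp_all [φ]
    · split_ifs <;> simp [hz, φ]
  have hcount : ∀ x y, pairCount (𝒟.map fun C => if u ∈ C then insert w C else C) x y =
      pairCount 𝒟 (φ x) (φ y) := fun x y => by
    rw [pairCount_map]
    exact congrArg _ (Multiset.filter_congr fun C hC => by rw [hmem C hC x, hmem C hC y])
  have hclone : ∀ y, y ≠ w → (G.Adj w y ↔ Odd (pairCount 𝒟 u (φ y))) := by
    intro y hy
    rcases eq_or_ne y u with rfl | hyu
    · simpa [φ, hy, G.adj_comm] using hpar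
    · simpa [φ, hy, ← htwin y hyu hy] using h u huw y hy hyu.symm
  intro x y hxy
  change G.Adj x y ↔ Odd (pairCount _ x y)
  rw [hcount]
  rcases eq_or_ne x w with rfl | hx
  · simpa [φ] using hclone y (Ne.symm hxy)
  rcases eq_or_ne y w with rfl | hy
  · rw [G.adj_comm, pairCount_comm]
    simpa [φ] using hclone x hxy
  · simpa [φ, hx, hy] using h x hx y hy hxy

def incidence (𝒞 : Multiset (Finset V)) (x : V) : 𝒞 → ZMod 2 :=
  fun C => if x ∈ (C : Finset V) then 1 else 0

lemma incidence_dotProduct (𝒞 : Multiset (Finset V)) (x y : V) :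
    incidence 𝒞 x ⬝ᵥ incidence 𝒞 y = pairCount 𝒞 x y := by
  simp only [dotProduct, incidence, ite_zero_mul_ite_zero, mul_one, Finset.sum_boole]
  congr 1
  rw [pairCount, Finset.card, Finset.filter_val]
  conv_rhs => rw [← Multiset.map_univ_coe 𝒞, Multiset.filter_map, Multiset.card_map]
  rfl

lemma IsSCSOn.exists_adj_iff_odd_pairCount_self {G : SimpleGraph V} {w : V} {𝒟 : Multiset (Finset V)}
    (h : IsSCSOn G {w}ᶜ 𝒟) {n : ℕ} (hcard : Multiset.card 𝒟 ≤ n) (u : Fin (n + 2) → V)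
    (hinj : Function.Injective u) (hu : ∀ i, u i ≠ w) (htwin : ∀ i, IsTwin G (u i) w) :
    ∃ i, (G.Adj (u i) w ↔ Odd (pairCount 𝒟 (u i) (u i))) := by
  classical
  by_contra hnone
  have hbad : ∀ i, Odd (pairCount 𝒟 (u i) (u i)) ↔ ¬G.Adj (u i) w := fun i =>
    (not_iff.mp (not_exists.mp hnone i)).symm
  let ε := G.Adj w (u 0)
  have hwu : ∀ i, G.Adj w (u i) ↔ ε := by
    intro i
    rcases eq_or_ne i 0 with rfl | hi
    · rfl
    · rw [← htwin 0 (u i) (hinj.ne hi) (hu i), G.adj_comm,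
        htwin i (u 0) (hinj.ne hi.symm) (hu 0)]
  have huu : ∀ i j, i ≠ j → (G.Adj (u i) (u j) ↔ ε) := fun i j hij =>
    (htwin i (u j) (hinj.ne hij.symm) (hu j)).trans (hwu j)
  have hdim := card_le_of_dotProduct_eq (fun i => incidence 𝒟 (u i)) (if ε then 1 else 0)
    (fun i => ?_) (fun i j hij => ?_)
  · rw [Multiset.card_coe] at hdim
    omega
  · rw [incidence_dotProduct, natCast_zmod_two_eq_ite ((hbad i).trans
      (not_congr ((G.adj_comm _ _).trans (hwu i))))]
    split_ifs <;> decide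
  · rw [incidence_dotProduct, natCast_zmod_two_eq_ite
      ((h _ (hu i) _ (hu j) (hinj.ne hij)).symm.trans (huu i j hij))]

end

theorem stmt18 (k : ℕ) :
    ∃ N : ℕ, ∀ (V : Type) [Fintype V] [DecidableEq V] (G : SimpleGraph V),
      k < c2 G →
      (∀ S : Finset V, S ≠ Finset.univ → c2 (G.induce (S : Set V)) ≤ k) →
      Fintype.card V ≤ N := by
  refine ⟨2 ^ (k + 1) * (k + 2) + 1, fun V _ _ G hc2 hind => ?_⟩
  by_contra! hV
  have hdelete : ∀ w : V, ∃ 𝒟 : Multiset (Finset V), Multiset.card 𝒟 ≤ k ∧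
      (∀ C ∈ 𝒟, w ∉ C) ∧ IsSCSOn G {w}ᶜ 𝒟 := fun w => by
    obtain ⟨𝒟, hcard, hw, h⟩ := exists_isSCSOn_compl_singleton G w
    exact ⟨𝒟, hcard ▸ hind _ (erase_ssubset (mem_univ w)).ne, hw, h⟩
  obtain ⟨v⟩ : Nonempty V := Fintype.card_pos_iff.mp (by omega)
  obtain ⟨𝒞, h𝒞k, -, h𝒞⟩ := hdelete v
  obtain ⟨T, hT, htwin⟩ := h𝒞.exists_twin_finset_card_gt h𝒞k (m := k + 2) (by omega)
  obtain ⟨w, hwT⟩ : T.Nonempty := card_pos.mp (by omega)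
  obtain ⟨f⟩ : Nonempty (Fin (k + 2) ↪ T.erase w) :=
    Function.Embedding.nonempty_of_card_le <| by
      rw [Fintype.card_fin, Fintype.card_coe, card_erase_of_mem hwT]
      omega
  have hu : ∀ i, (f i : V) ≠ w := fun i => ne_of_mem_erase (f i).2
  have hutwin : ∀ i, IsTwin G (f i) w := fun i => htwin _ (mem_of_mem_erase (f i).2) w hwT
  obtain ⟨𝒟, h𝒟k, hw𝒟, h𝒟⟩ := hdelete w
  obtain ⟨i, hpar⟩ := h𝒟.exists_adj_iff_odd_pairCount_self h𝒟k (fun i => (f i : V))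
    (Subtype.val_injective.comp f.injective) hu hutwin
  have := c2_le_card (h𝒟.isSCS_map_clone hw𝒟 (hu i) (hutwin i) hpar)
  rw [Multiset.card_map] at this
  omega
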